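/- Let M be an additive k-linear category over a field k in which End(1) ≅ k, 1 is an object, and suppose that for every indecomposable object X with M(1,X) ≠ 0, the End(X)-module M(1,X) is simple. Then every P(M)-submodule of M_1 = ⊕_X M(1,X) is a trace submodule Tr_S M_1 for some set S of indecomposable objects X with M(1,X) ≠ 0. -/

import Mathlib

open CategoryTheory Limits

/-- An object is indecomposable if it is nonzero and admits no nontrivial biproduct
decomposition. -/
def IndecObj {C : Type*} [Category C] [Preadditive C] [HasBinaryBiproducts C]
    (X : C) : Prop :=
  ¬ IsZero X ∧ ∀ Y W : C, Nonempty (X ≅ Y ⊞ W) → IsZero Y ∨ IsZero W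

/-
Call `Z` *active* if `N Z ≠ 0`. For an indecomposable active `Z` with `M(𝟙,Z)` simple over
`End(Z)`, any nonzero `f₀ ∈ N Z` generates all of `M(𝟙,Z)` under postcomposition, so `N Z` is
everything; hence the trace of the active indecomposables lies in `N`. Conversely, writing `X`
as a biproduct of indecomposables `D i`, every `f ∈ N X` is the sum of its components
`f ≫ πᵢ ∈ N (D i)` pushed back along `ιᵢ`, and each nonzero component lives at an active `D i`.
-/

namespace CategoryTheory

variable {C : Type*} [Category C] [Preadditive C]

/-- The trace submodule `Tr_S M(𝟙, X)`. -/
def traceSubmodule (k : Type*) [Semiring k] [Linear k C] (one : C) (S : Set C) (X : C) :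
    Submodule k (one ⟶ X) :=
  Submodule.span k {f : one ⟶ X | ∃ Z ∈ S, ∃ (g : one ⟶ Z) (h : Z ⟶ X), f = g ≫ h}

theorem eq_sum_comp_biproduct_components {W X : C} {ι : Type} [Fintype ι] {D : ι → C}
    [HasBiproduct D] (e : X ≅ ⨁ D) (f : W ⟶ X) :
    f = ∑ i, (f ≫ e.hom ≫ biproduct.π D i) ≫ biproduct.ι D i ≫ e.inv := by
  calc f = f ≫ e.hom ≫ (∑ i, biproduct.π D i ≫ biproduct.ι D i) ≫ e.inv := by
          rw [biproduct.total, Category.id_comp, Iso.hom_inv_id, Category.comp_id]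
    _ = _ := by simp only [Preadditive.sum_comp, Preadditive.comp_sum, Category.assoc]

section Submodules

variable {k : Type*} [Semiring k] [Linear k C] {one : C} {N : ∀ X : C, Submodule k (one ⟶ X)}

theorem traceSubmodule_le_of_forall_eq_top
    (hN : ∀ (X Y : C) (h : X ⟶ Y) (f : one ⟶ X), f ∈ N X → f ≫ h ∈ N Y)
    {S : Set C} (hS : ∀ Z ∈ S, N Z = ⊤) (X : C) :
    traceSubmodule k one S X ≤ N X := by
  rw [traceSubmodule, Submodule.span_le]
  rintro _ ⟨Z, hZ, g, h, rfl⟩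
  exact hN Z X h g (hS Z hZ ▸ Submodule.mem_top)

theorem eq_top_of_ne_bot_of_generated_by_nonzero
    (hN : ∀ (X Y : C) (h : X ⟶ Y) (f : one ⟶ X), f ∈ N X → f ≫ h ∈ N Y) {Z : C}
    (hgen : ∀ f : one ⟶ Z, f ≠ 0 → ∀ g : one ⟶ Z, ∃ e : Z ⟶ Z, g = f ≫ e)
    (hZ : N Z ≠ ⊥) : N Z = ⊤ := by
  obtain ⟨f₀, hf₀, hf₀_ne⟩ := (Submodule.ne_bot_iff _).1 hZ
  refine eq_top_iff.2 fun g _ => ?_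
  obtain ⟨e, rfl⟩ := hgen f₀ hf₀_ne g
  exact hN Z Z e f₀ hf₀

theorem le_traceSubmodule_of_iso_biproduct
    (hN : ∀ (X Y : C) (h : X ⟶ Y) (f : one ⟶ X), f ∈ N X → f ≫ h ∈ N Y)
    {S : Set C} {X : C} {ι : Type} [Fintype ι] {D : ι → C} [HasBiproduct D] (e : X ≅ ⨁ D)
    (hD : ∀ i, N (D i) ≠ ⊥ → D i ∈ S) :
    N X ≤ traceSubmodule k one S X := by
  intro f hf
  rw [eq_sum_comp_biproduct_components e f]
  refine Submodule.sum_mem _ fun i _ => ?_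
  by_cases h0 : f ≫ e.hom ≫ biproduct.π D i = 0
  · rw [h0, zero_comp]
    exact Submodule.zero_mem _
  · have hmem : f ≫ e.hom ≫ biproduct.π D i ∈ N (D i) := by
      simpa using hN X (D i) (e.hom ≫ biproduct.π D i) f hf
    have hactive : N (D i) ≠ ⊥ := fun hbot => h0 (by simpa [hbot] using hmem)
    exact Submodule.subset_span ⟨D i, hD i hactive, _, _, rfl⟩

end Submodules

end CategoryTheory

theorem submodule_is_trace_general
    (k : Type*) [Field k] (C : Type*) [Category C] [Preadditive C] [Linear k C]
    [HasFiniteBiproducts C] [HasBinaryBiproducts C]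
    (one : C)
    (hKS : ∀ X : C, ∃ (n : ℕ) (D : Fin n → C),
      (∀ i, IsLocalRing (End (D i)) ∧ IndecObj (D i)) ∧ Nonempty (X ≅ ⨁ D))
    (hsimple : ∀ X : C, IndecObj X → (∃ f : one ⟶ X, f ≠ 0) →
      ∀ f : one ⟶ X, f ≠ 0 → ∀ g : one ⟶ X, ∃ e : X ⟶ X, g = f ≫ e)
    (N : ∀ X : C, Submodule k (one ⟶ X))
    (hN : ∀ (X Y : C) (h : X ⟶ Y) (f : one ⟶ X), f ∈ N X → f ≫ h ∈ N Y) :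
    ∃ S : Set C, (∀ X ∈ S, IndecObj X ∧ ∃ f : one ⟶ X, f ≠ 0) ∧
      ∀ X : C, N X = Submodule.span k
        {f : one ⟶ X | ∃ Z ∈ S, ∃ (g : one ⟶ Z) (h : Z ⟶ X), f = g ≫ h} := by
  set S : Set C := {Z | IndecObj Z ∧ N Z ≠ ⊥}
  have hS_nonzero : ∀ Z ∈ S, ∃ f : one ⟶ Z, f ≠ 0 := fun Z hZ => by
    obtain ⟨f, -, hf⟩ := (Submodule.ne_bot_iff _).1 hZ.2
    exact ⟨f, hf⟩
  refine ⟨S, fun Z hZ => ⟨hZ.1, hS_nonzero Z hZ⟩, fun X => le_antisymm ?_ ?_⟩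
  · obtain ⟨n, D, hD, ⟨e⟩⟩ := hKS X
    exact le_traceSubmodule_of_iso_biproduct hN e fun i hi => ⟨(hD i).2, hi⟩
  · exact traceSubmodule_le_of_forall_eq_top hN (fun Z hZ =>
      eq_top_of_ne_bot_of_generated_by_nonzero hN
        (hsimple Z hZ.1 (hS_nonzero Z hZ)) hZ.2) X

/-- **Every submodule of `M_𝟙` is a trace submodule.**  Let `M` be an additive
Krull–Schmidt `k`-linear category over a field `k` with `End(𝟙) ≅ k`, and suppose that
for every indecomposable object `X` with `M(𝟙,X) ≠ 0` the `End(X)`-module `M(𝟙,X)` is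
simple.  Then every `P(M)`-submodule of `M_𝟙 = ⊕_X M(𝟙,X)` (a family of `k`-submodules
closed under postcomposition) is the trace submodule `Tr_S M_𝟙` for some set `S` of
indecomposable objects `X` with `M(𝟙,X) ≠ 0`. -/
theorem submodule_is_trace
    (k : Type*) [Field k] (C : Type*) [Category C] [Preadditive C] [Linear k C]
    [HasFiniteBiproducts C] [HasBinaryBiproducts C]
    (one : C) (hone : ∀ f : one ⟶ one, ∃ c : k, f = c • 𝟙 one)
    (hKS : ∀ X : C, ∃ (n : ℕ) (D : Fin n → C),
      (∀ i, IsLocalRing (End (D i)) ∧ IndecObj (D i)) ∧ Nonempty (X ≅ ⨁ D))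
    (hsimple : ∀ X : C, IndecObj X → (∃ f : one ⟶ X, f ≠ 0) →
      ∀ f : one ⟶ X, f ≠ 0 → ∀ g : one ⟶ X, ∃ e : X ⟶ X, g = f ≫ e)
    (N : ∀ X : C, Submodule k (one ⟶ X))
    (hN : ∀ (X Y : C) (h : X ⟶ Y) (f : one ⟶ X), f ∈ N X → f ≫ h ∈ N Y) :
    ∃ S : Set C, (∀ X ∈ S, IndecObj X ∧ ∃ f : one ⟶ X, f ≠ 0) ∧
      ∀ X : C, N X = Submodule.span k
        {f : one ⟶ X | ∃ Z ∈ S, ∃ (g : one ⟶ Z) (h : Z ⟶ X), f = g ≫ h} :=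
  submodule_is_trace_general k C one hKS hsimple N hN
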